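/- Let N be an additive subgroup of ℚⁿ containing ℤⁿ. Then the monoid P(N) = {x ∈ N : xᵢ ≥ 0 for all i} is generated as an additive monoid by the set {e₁,…,eₙ} ∪ {x ∈ N : 0 ≤ xᵢ < 1 for all i}; that is, every element of P(N) is a finite sum of standard basis vectors eᵢ and of elements of N all of whose coordinates lie in [0,1). -/

import Mathlib

/-!
Split a nonnegative point `x ∈ N` as `x = fract x + ⌊x⌋`, coordinatewise. The integral part
`⌊x⌋ ∈ ℕⁿ` is a sum of basis vectors, and the fractional part lies in `[0,1)ⁿ` and in `N`,
being the difference of `x ∈ N` and `⌊x⌋ ∈ ℤⁿ ⊆ N`.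
-/

def AddSubgroup.nonnegPoints {ι K : Type*} [AddCommGroup K] [PartialOrder K]
    [IsOrderedAddMonoid K] (N : AddSubgroup (ι → K)) : AddSubmonoid (ι → K) where
  carrier := {x | x ∈ N ∧ ∀ i, 0 ≤ x i}
  zero_mem' := ⟨N.zero_mem, fun _ => le_rfl⟩
  add_mem' hx hy := ⟨N.add_mem hx.1 hy.1, fun i => add_nonneg (hx.2 i) (hy.2 i)⟩

theorem AddSubgroup.single_one_mem_of_intPoints_le {ι K : Type*} [DecidableEq ι] [Ring K]
    {N : AddSubgroup (ι → K)} (hZ : ∀ q : ι → K, (∀ i, ∃ m : ℤ, q i = m) → q ∈ N) (i : ι) :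
    Pi.single i 1 ∈ N :=
  hZ _ fun j => ⟨(Pi.single i 1 : ι → ℤ) j, by rcases eq_or_ne j i with rfl | h <;> simp [*]⟩

theorem AddSubgroup.fract_mem_of_intPoints_le {ι K : Type*} [Ring K] [LinearOrder K]
    [FloorRing K] {N : AddSubgroup (ι → K)}
    (hZ : ∀ q : ι → K, (∀ i, ∃ m : ℤ, q i = m) → q ∈ N) {x : ι → K} (hx : x ∈ N) :
    (fun i => Int.fract (x i)) ∈ N :=
  N.sub_mem hx (hZ _ fun i => ⟨⌊x i⌋, rfl⟩)

theorem natCast_mem_closure_range_single {ι K : Type*} [Fintype ι] [DecidableEq ι]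
    [AddCommMonoidWithOne K] (c : ι → ℕ) :
    (fun i => (c i : K)) ∈ AddSubmonoid.closure (Set.range fun i => (Pi.single i 1 : ι → K)) := by
  have hsum : (fun i => (c i : K)) = ∑ i, c i • Pi.single i 1 := by
    ext j
    simp [Finset.sum_apply, Pi.single_apply]
  rw [hsum]
  exact AddSubmonoid.sum_mem _ fun i _ =>
    AddSubmonoid.nsmul_mem _ (AddSubmonoid.subset_closure (Set.mem_range_self i)) _

theorem fract_add_natFloor {ι K : Type*} [Ring K] [LinearOrder K] [IsStrictOrderedRing K]
    [FloorRing K] {x : ι → K} (hx : ∀ i, 0 ≤ x i) :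
    (fun i => Int.fract (x i)) + (fun i => (⌊x i⌋₊ : K)) = x := by
  ext i
  simp [natCast_floor_eq_intCast_floor (hx i)]

/-- **(Gordan-type generation.)** If `N` is an additive subgroup of `ℚⁿ` containing `ℤⁿ`,
then the monoid `P(N) = {x ∈ N : xᵢ ≥ 0 ∀i}` is generated as an additive monoid by the
standard basis vectors `e₁,…,eₙ` together with the points of `N` lying in the half-open
cube `[0,1)ⁿ`. -/
theorem stmt_5 {n : ℕ} (N : AddSubgroup (Fin n → ℚ))
    (hZ : ∀ q : Fin n → ℚ, (∀ i, ∃ m : ℤ, q i = (m : ℚ)) → q ∈ N) :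
    (AddSubmonoid.closure
        ({y | ∃ i : Fin n, y = Pi.single i (1 : ℚ)} ∪
          {y : Fin n → ℚ | y ∈ N ∧ ∀ i, 0 ≤ y i ∧ y i < 1}) : Set (Fin n → ℚ))
      = {x : Fin n → ℚ | x ∈ N ∧ ∀ i, 0 ≤ x i} := by
  set S := {y | ∃ i : Fin n, y = Pi.single i (1 : ℚ)} ∪
    {y : Fin n → ℚ | y ∈ N ∧ ∀ i, 0 ≤ y i ∧ y i < 1}
  suffices AddSubmonoid.closure S = N.nonnegPoints from congrArg SetLike.coe this
  refine le_antisymm (AddSubmonoid.closure_le.2 ?_) fun x ⟨hxN, hx⟩ => ?_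
  · rintro y (⟨i, rfl⟩ | ⟨hyN, hy⟩)
    · exact ⟨N.single_one_mem_of_intPoints_le hZ i, Pi.single_nonneg.2 zero_le_one⟩
    · exact ⟨hyN, fun i => (hy i).1⟩
  · have hfract : (fun i => Int.fract (x i)) ∈ AddSubmonoid.closure S :=
      AddSubmonoid.subset_closure <| Or.inr
        ⟨N.fract_mem_of_intPoints_le hZ hxN, fun i => ⟨Int.fract_nonneg _, Int.fract_lt_one _⟩⟩
    have hfloor : (fun i => (⌊x i⌋₊ : ℚ)) ∈ AddSubmonoid.closure S :=
      AddSubmonoid.closure_mono (by rintro _ ⟨i, rfl⟩; exact Or.inl ⟨i, rfl⟩)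
        (natCast_mem_closure_range_single _)
    simpa only [fract_add_natFloor hx] using AddSubmonoid.add_mem _ hfract hfloor
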